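/- arXiv:1905.02237 — 2 statements merged into one kernel-verified Lean document; each statement's English description precedes it below -/
import Mathlib

section
/- Suppose p: [0,T] → ℝ^N is differentiable, satisfies p(T) = 0, and ṗ(t) = Γ(t)p(t) + γ(t) where for each t the matrix Γ(t) has nonnegative diagonal entries and nonpositive off-diagonal entries, and γ(t) has all components ≤ 0 with at least the i-th component γ_i(t) < 0 for all t. Then p_j(t) ≥ 0 for all j and all t ∈ [0,T], and p_i(t) > 0 for all t ∈ [0,T). -/
open Real Set Filter Topology

/-- If `f` has derivative `d` at `a` and `f a` is minimal on `(a, b]`, then `0 ≤ d`. -/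
lemma deriv_nonneg_of_right_min (f : ℝ → ℝ) (d a b : ℝ) (hab : a < b)
    (hf : HasDerivAt f d a) (h : ∀ t ∈ Set.Ioc a b, f a ≤ f t) : 0 ≤ d := by
  have h1 : Tendsto (slope f a) (𝓝[>] a) (𝓝 d) :=
    (hasDerivAt_iff_tendsto_slope.mp hf).mono_left
      (nhdsWithin_mono _ (fun x hx => ne_of_gt hx))
  refine ge_of_tendsto h1 ?_
  filter_upwards [Ioc_mem_nhdsGT_of_mem (Set.left_mem_Ico.2 hab)] with t ht
  have h2 : 0 < t - a := sub_pos.2 ht.1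
  have h3 := h t ht
  rw [slope_def_field]
  exact div_nonneg (by linarith) (by linarith)

/-- Costate positivity: if `p : [0,T] → ℝ^N` satisfies `ṗ(t) = Γ(t)p(t) + γ(t)`,
`p(T) = 0`, where `Γ(t)` has nonnegative diagonal and nonpositive off-diagonal entries
and `γ(t) ≤ 0` componentwise with `γ_i(t) < 0`, then `p_j(t) ≥ 0` for all `j` and
`t ∈ [0,T]`, and `p_i(t) > 0` for `t ∈ [0,T)`. -/
theorem costate_positivity
    (N : ℕ) (T : ℝ) (hT : 0 < T)
    (Γ : ℝ → Matrix (Fin N) (Fin N) ℝ) (γ : ℝ → Fin N → ℝ)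
    (hΓcont : ∀ m n, Continuous fun t => Γ t m n)
    (hγcont : ∀ j, Continuous fun t => γ t j)
    (hΓdiag : ∀ t ∈ Set.Icc (0 : ℝ) T, ∀ m, 0 ≤ Γ t m m)
    (hΓoff : ∀ t ∈ Set.Icc (0 : ℝ) T, ∀ m n, m ≠ n → Γ t m n ≤ 0)
    (hγ : ∀ t ∈ Set.Icc (0 : ℝ) T, ∀ j, γ t j ≤ 0)
    (i : Fin N)
    (hγi : ∀ t ∈ Set.Icc (0 : ℝ) T, γ t i < 0)
    (p : ℝ → Fin N → ℝ)
    (hode : ∀ t ∈ Set.Icc (0 : ℝ) T, ∀ j,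
      HasDerivAt (fun s => p s j) (∑ k, Γ t j k * p t k + γ t j) t)
    (hterm : ∀ j, p T j = 0) :
    (∀ t ∈ Set.Icc (0 : ℝ) T, ∀ j, 0 ≤ p t j) ∧
    (∀ t ∈ Set.Ico (0 : ℝ) T, 0 < p t i) := by
  -- A bound L for the total absolute size of Γ on [0,T]
  set F : ℝ → ℝ := fun t => ∑ m, ∑ n, |Γ t m n| with hF
  have hFcont : Continuous F := by
    apply continuous_finset_sum; intro m _
    exact continuous_finset_sum _ (fun n _ => (hΓcont m n).abs)
  obtain ⟨t₀, ht₀, hmax'⟩ := isCompact_Icc.exists_isMaxOn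
    (Set.nonempty_Icc.2 hT.le) hFcont.continuousOn
  have hmax : ∀ t ∈ Set.Icc (0:ℝ) T, F t ≤ F t₀ := fun t ht => hmax' ht
  set L : ℝ := F t₀ with hL
  have hL0 : 0 ≤ L := by
    apply Finset.sum_nonneg; intro m _
    exact Finset.sum_nonneg (fun n _ => abs_nonneg _)
  have hFle : ∀ t ∈ Set.Icc (0:ℝ) T, ∀ m n, |Γ t m n| ≤ L := by
    intro t ht m n
    calc |Γ t m n| ≤ ∑ n', |Γ t m n'| :=
          Finset.single_le_sum (f := fun n' => |Γ t m n'|)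
            (fun _ _ => abs_nonneg _) (Finset.mem_univ n)
      _ ≤ F t := Finset.single_le_sum (f := fun m' => ∑ n', |Γ t m' n'|)
            (fun _ _ => Finset.sum_nonneg fun _ _ => abs_nonneg _) (Finset.mem_univ m)
      _ ≤ L := hmax t ht
  have hFrow : ∀ t ∈ Set.Icc (0:ℝ) T, ∀ m, (∑ n ∈ Finset.univ.erase m, |Γ t m n|) ≤ L := by
    intro t ht m
    calc (∑ n ∈ Finset.univ.erase m, |Γ t m n|) ≤ ∑ n', |Γ t m n'| :=
          Finset.sum_le_sum_of_subset_of_nonneg (Finset.subset_univ _)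
            (fun _ _ _ => abs_nonneg _)
      _ ≤ F t := Finset.single_le_sum (f := fun m' => ∑ n', |Γ t m' n'|)
            (fun _ _ => Finset.sum_nonneg fun _ _ => abs_nonneg _) (Finset.mem_univ m)
      _ ≤ L := hmax t ht
  set C : ℝ := L + 1 with hC
  have hC0 : 0 < C := by linarith
  -- the key barrier estimate
  have key : ∀ ε > (0:ℝ), ∀ t ∈ Set.Icc (0:ℝ) T, ∀ j,
      0 < p t j + ε * Real.exp (C * (T - t)) := by
    intro ε hε
    by_contra hcon
    push_neg at hcon
    obtain ⟨t₁, ht₁, j₁, hj₁⟩ := hcon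
    set B : Set ℝ := {t | t ∈ Set.Icc (0:ℝ) T ∧ ∃ j, p t j + ε * Real.exp (C * (T - t)) ≤ 0}
      with hBdef
    have hBne : B.Nonempty := ⟨t₁, ht₁, j₁, hj₁⟩
    have hbdd : BddAbove B := ⟨T, fun t ht => ht.1.2⟩
    set s := sSup B with hs
    have hsmem : s ∈ Set.Icc (0:ℝ) T :=
      ⟨le_trans ht₁.1 (le_csSup hbdd ⟨ht₁, j₁, hj₁⟩), csSup_le hBne (fun t ht => ht.1.2)⟩
    -- everything strictly to the right of s is good
    have hafter : ∀ t, s < t → t ≤ T → ∀ j, 0 < p t j + ε * Real.exp (C * (T - t)) := by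
      intro t hst htT j
      by_contra hle
      push_neg at hle
      exact absurd (le_csSup hbdd ⟨⟨le_trans hsmem.1 hst.le, htT⟩, j, hle⟩) (not_le.2 hst)
    -- continuity of each component of the barrier at points of [0,T]
    have hgcont : ∀ t ∈ Set.Icc (0:ℝ) T, ∀ j,
        ContinuousAt (fun u => p u j + ε * Real.exp (C * (T - u))) t := by
      intro t ht j
      exact (hode t ht j).continuousAt.add (by fun_prop)
    -- at s itself there must be a bad component
    have hjs : ∃ j, p s j + ε * Real.exp (C * (T - s)) ≤ 0 := by
      by_contra hno
      push_neg at hno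
      have hev : ∀ᶠ t in 𝓝 s, ∀ j, 0 < p t j + ε * Real.exp (C * (T - t)) :=
        eventually_all.2 fun j => (hgcont s hsmem j).eventually (eventually_gt_nhds (hno j))
      obtain ⟨δ, hδ, hball⟩ := Metric.eventually_nhds_iff.mp hev
      obtain ⟨b, hbB, hbs⟩ := exists_lt_of_lt_csSup hBne (by linarith : s - δ < s)
      have hbles : b ≤ s := le_csSup hbdd hbB
      obtain ⟨j, hj⟩ := hbB.2
      have : 0 < p b j + ε * Real.exp (C * (T - b)) := by
        refine hball ?_ j
        rw [Real.dist_eq, abs_lt]; constructor <;> linarith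
      linarith
    have hsT : s < T := by
      rcases lt_or_eq_of_le hsmem.2 with h | h
      · exact h
      · exfalso
        obtain ⟨j, hj⟩ := hjs
        rw [h] at hj
        simp [hterm j] at hj
        nlinarith [Real.exp_pos (C * (T - T)), hj]
    -- all components are ≥ the barrier at s
    have hge0 : ∀ k, 0 ≤ p s k + ε * Real.exp (C * (T - s)) := by
      intro k
      by_contra hneg
      push_neg at hneg
      have hev : ∀ᶠ t in 𝓝 s, p t k + ε * Real.exp (C * (T - t)) < 0 :=
        (hgcont s hsmem k).eventually (eventually_lt_nhds hneg)
      obtain ⟨δ, hδ, hball⟩ := Metric.eventually_nhds_iff.mp hev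
      set t := min (s + δ/2) ((s + T)/2) with htdef
      have hst : s < t := lt_min (by linarith) (by linarith)
      have htT : t ≤ T := le_trans (min_le_right _ _) (by linarith)
      have hdist : dist t s < δ := by
        rw [Real.dist_eq, abs_lt]
        constructor
        · linarith [min_le_right (s + δ/2) ((s + T)/2)]
        · have := min_le_left (s + δ/2) ((s + T)/2); linarith
      have h1 := hball hdist
      have h2 := hafter t hst htT k
      linarith
    obtain ⟨j, hj⟩ := hjs
    have hj0 : p s j + ε * Real.exp (C * (T - s)) = 0 := le_antisymm hj (hge0 j)
    set E : ℝ := Real.exp (C * (T - s)) with hE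
    have hEpos : 0 < E := Real.exp_pos _
    -- derivative of the barrier function for component j at s
    have hder : HasDerivAt (fun u => p u j + ε * Real.exp (C * (T - u)))
        ((∑ k, Γ s j k * p s k + γ s j) + ε * (E * -C)) s := by
      refine (hode s hsmem j).add ?_
      have h1 : HasDerivAt (fun u => C * (T - u)) (-C) s := by
        simpa using (((hasDerivAt_id s).const_sub T).const_mul C)
      exact (h1.exp.const_mul ε)
    have hdge : 0 ≤ (∑ k, Γ s j k * p s k + γ s j) + ε * (E * -C) := by
      refine deriv_nonneg_of_right_min _ _ s T hsT hder ?_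
      intro t ht
      have := hafter t ht.1 ht.2 j
      rw [hj0]; linarith
    -- but the derivative is in fact negative
    have hpsj : p s j = -(ε * E) := by linarith
    have hsum : ∑ k, Γ s j k * p s k ≤ L * (ε * E) := by
      rw [← Finset.add_sum_erase _ _ (Finset.mem_univ j)]
      have h1 : Γ s j j * p s j ≤ 0 := by
        rw [hpsj]
        have h0 := hΓdiag s hsmem j
        nlinarith [mul_nonneg h0 (mul_pos hε hEpos).le]
      have h2 : ∑ k ∈ Finset.univ.erase j, Γ s j k * p s k ≤ L * (ε * E) := by
        calc ∑ k ∈ Finset.univ.erase j, Γ s j k * p s k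
            ≤ ∑ k ∈ Finset.univ.erase j, |Γ s j k| * (ε * E) := by
              apply Finset.sum_le_sum
              intro k hk
              have hne : j ≠ k := (Finset.ne_of_mem_erase hk).symm
              have hΓk : Γ s j k ≤ 0 := hΓoff s hsmem j k hne
              have hpk : -(ε * E) ≤ p s k := by have := hge0 k; linarith
              have habs : |Γ s j k| = -Γ s j k := abs_of_nonpos hΓk
              rw [habs]
              nlinarith
          _ = (∑ k ∈ Finset.univ.erase j, |Γ s j k|) * (ε * E) := by
              rw [Finset.sum_mul]
          _ ≤ L * (ε * E) := by
              apply mul_le_mul_of_nonneg_right (hFrow s hsmem j)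
              positivity
      linarith
    have hγj : γ s j ≤ 0 := hγ s hsmem j
    have : (∑ k, Γ s j k * p s k + γ s j) + ε * (E * -C) ≤ -(ε * E) := by
      have : ε * (E * -C) = -(L * (ε * E)) - ε * E := by rw [hC]; ring
      rw [this]; linarith
    nlinarith
  -- Part 1: nonnegativity
  have part1 : ∀ t ∈ Set.Icc (0:ℝ) T, ∀ j, 0 ≤ p t j := by
    intro t ht j
    by_contra hneg
    push_neg at hneg
    set M : ℝ := Real.exp (C * (T - t)) with hM
    have hMpos : 0 < M := Real.exp_pos _
    have hεpos : 0 < -(p t j) / M := div_pos (by linarith) hMpos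
    have := key _ hεpos t ht j
    rw [div_mul_cancel₀ _ (ne_of_gt hMpos)] at this
    linarith
  refine ⟨part1, ?_⟩
  -- Part 2: strict positivity of component i
  set h : ℝ → ℝ := fun t => Real.exp (-(L * t)) * p t i with hh
  have hhd : ∀ x ∈ Set.Icc (0:ℝ) T, HasDerivAt h
      (Real.exp (-(L * x)) * -L * p x i +
        Real.exp (-(L * x)) * (∑ k, Γ x i k * p x k + γ x i)) x := by
    intro x hx
    have h1 : HasDerivAt (fun t : ℝ => Real.exp (-(L * t))) (Real.exp (-(L * x)) * -L) x := by
      have : HasDerivAt (fun t : ℝ => -(L * t)) (-L) x := by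
        exact ((hasDerivAt_id x).const_mul L).neg.congr_deriv (by ring)
      exact this.exp
    exact h1.mul (hode x hx i)
  have hcontOn : ContinuousOn h (Set.Icc 0 T) := by
    apply ContinuousOn.mul (by fun_prop)
    exact fun t ht => (hode t ht i).continuousAt.continuousWithinAt
  have hanti : StrictAntiOn h (Set.Icc 0 T) := by
    apply strictAntiOn_of_deriv_neg (convex_Icc 0 T) hcontOn
    intro x hx
    rw [interior_Icc] at hx
    have hxI : x ∈ Set.Icc (0:ℝ) T := ⟨hx.1.le, hx.2.le⟩
    rw [(hhd x hxI).deriv]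
    have hexp : 0 < Real.exp (-(L * x)) := Real.exp_pos _
    have hpi : 0 ≤ p x i := part1 x hxI i
    have hsum : ∑ k, Γ x i k * p x k ≤ L * p x i := by
      rw [← Finset.add_sum_erase _ _ (Finset.mem_univ i)]
      have h1 : Γ x i i * p x i ≤ L * p x i := by
        apply mul_le_mul_of_nonneg_right _ hpi
        calc Γ x i i ≤ |Γ x i i| := le_abs_self _
          _ ≤ L := hFle x hxI i i
      have h2 : ∑ k ∈ Finset.univ.erase i, Γ x i k * p x k ≤ 0 := by
        apply Finset.sum_nonpos
        intro k hk
        have hne : i ≠ k := (Finset.ne_of_mem_erase hk).symm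
        exact mul_nonpos_of_nonpos_of_nonneg (hΓoff x hxI i k hne) (part1 x hxI k)
      linarith
    have hγx : γ x i < 0 := hγi x hxI
    nlinarith
  intro t ht
  have h1 : h T < h t := hanti ⟨ht.1, ht.2.le⟩ (Set.right_mem_Icc.2 hT.le) ht.2
  have h2 : h T = 0 := by simp [hh, hterm i]
  rw [h2] at h1
  have h3 : 0 < Real.exp (-(L * t)) * p t i := h1
  have hexp : 0 < Real.exp (-(L * t)) := Real.exp_pos _
  nlinarith
end

section
/- At the terminal time T, the Nash-equilibrium weight is restored to the original value: u*_{ij}(T) = w^o_{ij} for all i and out-neighbors j; moreover if g_{ij} is strictly convex with g'_{ij}(0) = 0 and p_{ii}(t) > 0, x_i*(t) ∈ (0,1), x_j*(t) ∈ (0,1) for t < T, then u*_{ij}(t) < w^o_{ij} for all t < T. -/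
/-- Terminal restoration of the weight: with `φ(t) = p(t)(1−x_i(t))β x_j(t)` and the
Nash-equilibrium weight `u(t)` characterized as a minimizer of
`v ↦ g(v − w⁰) + φ(t)·v` on `[0, w⁰]`, the transversality condition `p(T) = 0` gives
`u(T) = w⁰`; moreover if `g` is strictly convex, differentiable with `g'(0) = 0`, and
`p(t) > 0`, `x_i(t), x_j(t) ∈ (0,1)`, `β > 0` for `t < T`, then `u(t) < w⁰` for all
`t ∈ [0,T)`. -/
theorem terminal_weight_restoration
    (T β wo : ℝ) (hT : 0 < T) (hβ : 0 < β) (hwo : 0 < wo)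
    (g : ℝ → ℝ)
    (hgconv : StrictConvexOn ℝ Set.univ g)
    (hgdiff : Differentiable ℝ g)
    (hgd0 : deriv g 0 = 0)
    (p xi xj u : ℝ → ℝ)
    (hterm : p T = 0)
    (hppos : ∀ t ∈ Set.Ico (0 : ℝ) T, 0 < p t)
    (hxi : ∀ t ∈ Set.Icc (0 : ℝ) T, xi t ∈ Set.Ioo (0 : ℝ) 1)
    (hxj : ∀ t ∈ Set.Icc (0 : ℝ) T, xj t ∈ Set.Ioo (0 : ℝ) 1)
    (hu : ∀ t ∈ Set.Icc (0 : ℝ) T, u t ∈ Set.Icc (0 : ℝ) wo ∧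
      IsMinOn (fun v => g (v - wo) + (p t * (1 - xi t) * β * xj t) * v)
        (Set.Icc (0 : ℝ) wo) (u t)) :
    u T = wo ∧ ∀ t ∈ Set.Ico (0 : ℝ) T, u t < wo := by
  -- g has a strict global minimum at 0 from the left
  have key : ∀ x : ℝ, x < 0 → g 0 < g x := by
    intro x hx
    have h := hgconv.slope_lt_deriv (Set.mem_univ x) (Set.mem_univ 0) hx (hgdiff 0)
    rw [hgd0, slope_def_field] at h
    have hden : (0:ℝ) < 0 - x := by linarith
    have hnum : g 0 - g x < 0 := by
      by_contra hc
      push_neg at hc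
      exact absurd (div_nonneg hc hden.le) (not_le.mpr h)
    linarith
  constructor
  · -- terminal case
    obtain ⟨⟨_, huTle⟩, huTmin⟩ := hu T ⟨hT.le, le_refl T⟩
    have hφT : p T * (1 - xi T) * β * xj T = 0 := by rw [hterm]; ring
    by_contra hne
    have hlt : u T < wo := lt_of_le_of_ne huTle hne
    have hmin := isMinOn_iff.mp huTmin wo ⟨hwo.le, le_refl wo⟩
    simp only [hφT, zero_mul, sub_self, add_zero] at hmin
    have := key (u T - wo) (by linarith)
    linarith
  · intro t ht
    obtain ⟨⟨hu0, hule⟩, humin⟩ := hu t ⟨ht.1, ht.2.le⟩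
    set φ := p t * (1 - xi t) * β * xj t with hφdef
    have hpt := hppos t ht
    obtain ⟨hi1, hi2⟩ := hxi t ⟨ht.1, ht.2.le⟩
    obtain ⟨hj1, _⟩ := hxj t ⟨ht.1, ht.2.le⟩
    have hφ : 0 < φ := by
      have h1 : (0:ℝ) < 1 - xi t := by linarith
      exact mul_pos (mul_pos (mul_pos hpt h1) hβ) hj1
    rcases lt_or_eq_of_le hule with h | h
    · exact h
    · exfalso
      -- u t = wo; find a better point
      have hd := (hgdiff 0).hasDerivAt
      rw [hasDerivAt_iff_tendsto_slope, hgd0] at hd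
      have hev : ∀ᶠ x in nhdsWithin (0:ℝ) {0}ᶜ, -φ < slope g 0 x :=
        hd.eventually (eventually_gt_nhds (by linarith : -φ < (0:ℝ)))
      have hle : nhdsWithin (0:ℝ) (Set.Iio 0) ≤ nhdsWithin (0:ℝ) {0}ᶜ :=
        nhdsWithin_mono 0 (fun x hx => ne_of_lt hx)
      have hev2 : ∀ᶠ x in nhdsWithin (0:ℝ) (Set.Iio 0), -φ < slope g 0 x := hev.filter_mono hle
      have hmem : Set.Ioo (-wo) 0 ∈ nhdsWithin (0:ℝ) (Set.Iio 0) :=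
        Ioo_mem_nhdsLT_of_mem ⟨by linarith, le_refl (0:ℝ)⟩
      obtain ⟨x, hslope, hx1, hx2⟩ := (hev2.and (Filter.eventually_of_mem hmem fun x hx => hx)).exists
      -- x ∈ (-wo, 0), slope g 0 x > -φ
      have hxneg : x < 0 := hx2
      rw [slope_def_field] at hslope
      have hslope' : g x - g 0 < -φ * (x - 0) := by
        have := (lt_div_iff_of_neg (by linarith : x - 0 < 0)).mp hslope
        linarith
      -- compare f at v := wo + x with f at wo
      have hv : wo + x ∈ Set.Icc (0:ℝ) wo := ⟨by linarith, by linarith⟩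
      have hmin := isMinOn_iff.mp humin (wo + x) hv
      rw [h] at hmin
      simp only [sub_self, add_sub_cancel_left] at hmin
      -- hmin : g 0 + φ * wo ≤ g x + φ * (wo + x)
      nlinarith [hmin]
end
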